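/- Let n be a positive natural number, a > 0 and s > 0, and let p₀ be a probability density function on ℝⁿ with finite first moment (∫ ‖x₀‖ p₀(x₀) dx₀ < ∞). Define p(x) = ∫_{ℝⁿ} (2πs)^{-n/2} · exp(-‖x - a·x₀‖² / (2s)) · p₀(x₀) dx₀. Then p is everywhere positive and differentiable, and for every x ∈ ℝⁿ its score satisfies ∇ log p(x) = (1/s) · ( a · m(x) - x ), where m(x) = ( ∫ x₀ · exp(-‖x - a·x₀‖²/(2s)) · p₀(x₀) dx₀ ) / ( ∫ exp(-‖x - a·x₀‖²/(2s)) · p₀(x₀) dx₀ ) is the posterior mean of x₀ given the observation x. -/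

import Mathlib

/-!
Write `p = C · Z` with `Z x = ∫ exp (-‖x - a • x₀‖² / (2s)) p₀ x₀`. The integrand has
`x`-gradient `exp (…) p₀ x₀ • (a • x₀ - x) / s`, dominated for `x` in a unit ball by
`(|a| ‖x₀‖ + ‖x‖ + 1) p₀ x₀ / s`, which is integrable thanks to the first moment of `p₀`; so `Z` may
be differentiated under the integral sign. The constant `C` disappears from `∇ log p = ∇ Z / Z`,
and `Z > 0` because the kernel is positive and `p₀` has mass one.
-/

open MeasureTheory Real InnerProductSpace Metric

section Kernel

variable {E : Type*} [NormedAddCommGroup E] [InnerProductSpace ℝ E]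

/-- Unnormalised density of `𝒩(a • x₀, s • 1)` at `x`. -/
noncomputable def gaussKernel (a s : ℝ) (x x₀ : E) : ℝ := exp (-‖x - a • x₀‖ ^ 2 / (2 * s))

variable {a s : ℝ}

lemma gaussKernel_pos (x x₀ : E) : 0 < gaussKernel a s x x₀ := exp_pos _

lemma gaussKernel_le_one (hs : 0 ≤ s) (x x₀ : E) : gaussKernel a s x x₀ ≤ 1 :=
  exp_le_one_iff.mpr (div_nonpos_of_nonpos_of_nonneg (by simp only [neg_nonpos]; positivity)
    (by positivity))

lemma norm_gaussKernel_mul_le (hs : 0 ≤ s) (x x₀ : E) (c : ℝ) :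
    ‖gaussKernel a s x x₀ * c‖ ≤ ‖c‖ := by
  rw [norm_mul, norm_of_nonneg (gaussKernel_pos x x₀).le]
  exact mul_le_of_le_one_left (norm_nonneg c) (gaussKernel_le_one hs x x₀)

lemma continuous_gaussKernel (x : E) : Continuous (gaussKernel a s x) := by
  unfold gaussKernel; fun_prop

lemma hasFDerivAt_gaussKernel (x₀ x : E) :
    HasFDerivAt (gaussKernel a s · x₀)
      (innerSL ℝ ((s⁻¹ * gaussKernel a s x x₀) • (a • x₀ - x))) x := by
  have hsq : HasFDerivAt (fun y : E => ‖y - a • x₀‖ ^ 2) (2 • innerSL ℝ (x - a • x₀)) x := by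
    simpa using ((hasFDerivAt_id x).sub_const (a • x₀)).norm_sq
  have hexp := (hsq.const_mul (-(2 * s)⁻¹)).exp
  have hfun : (gaussKernel a s · x₀) = fun y => exp (-(2 * s)⁻¹ * ‖y - a • x₀‖ ^ 2) := by
    funext y; unfold gaussKernel; ring_nf
  rw [hfun]
  refine hexp.congr_fderiv (ContinuousLinearMap.ext fun u => ?_)
  simp only [gaussKernel, smul_apply, innerSL_apply_apply, smul_eq_mul, nsmul_eq_mul,
    inner_sub_left, real_inner_smul_left]
  rw [show -‖x - a • x₀‖ ^ 2 / (2 * s) = -(2 * s)⁻¹ * ‖x - a • x₀‖ ^ 2 by ring]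
  ring

end Kernel

section Integral

variable {E : Type*} [NormedAddCommGroup E] [InnerProductSpace ℝ E] [MeasurableSpace E]
  [BorelSpace E] {μ : Measure E} {w : E → ℝ} {a s : ℝ}

lemma integrable_gaussKernel_mul (hs : 0 ≤ s) (hw : Integrable w μ) (x : E) :
    Integrable (fun x₀ => gaussKernel a s x x₀ * w x₀) μ :=
  hw.norm.mono' ((continuous_gaussKernel x).aestronglyMeasurable.mul hw.1)
    (.of_forall fun x₀ => norm_gaussKernel_mul_le hs x x₀ (w x₀))

lemma integral_gaussKernel_mul_pos (hs : 0 ≤ s) (hw₀ : 0 ≤ w) (hw : Integrable w μ)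
    (hpos : 0 < ∫ x₀, w x₀ ∂μ) (x : E) : 0 < ∫ x₀, gaussKernel a s x x₀ * w x₀ ∂μ := by
  have hsupp : Function.support (fun x₀ => gaussKernel a s x x₀ * w x₀) = Function.support w :=
    Function.support_mul_of_ne_zero_left (fun x₀ => (gaussKernel_pos x x₀).ne') w
  rw [integral_pos_iff_support_of_nonneg (fun x₀ => mul_nonneg (gaussKernel_pos x x₀).le (hw₀ x₀))
    (integrable_gaussKernel_mul hs hw x), hsupp]
  exact (integral_pos_iff_support_of_nonneg hw₀ hw).mp hpos

variable [SecondCountableTopology E]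

lemma integrable_gaussKernel_mul_smul (hs : 0 ≤ s) (hw : Integrable w μ)
    (hw₁ : Integrable (fun x₀ => ‖x₀‖ * w x₀) μ) (x : E) :
    Integrable (fun x₀ => (gaussKernel a s x x₀ * w x₀) • x₀) μ :=
  hw₁.norm.mono' ((integrable_gaussKernel_mul hs hw x).1.smul aestronglyMeasurable_id)
    (.of_forall fun x₀ => by
      rw [norm_smul, norm_mul ‖x₀‖, norm_norm, mul_comm ‖x₀‖]
      exact mul_le_mul_of_nonneg_right (norm_gaussKernel_mul_le hs x x₀ (w x₀)) (norm_nonneg _))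

variable [CompleteSpace E]

lemma integral_gaussKernel_mul_smul_sub (hs : 0 ≤ s) (hw : Integrable w μ)
    (hw₁ : Integrable (fun x₀ => ‖x₀‖ * w x₀) μ) (x : E) :
    ∫ x₀, (s⁻¹ * (gaussKernel a s x x₀ * w x₀)) • (a • x₀ - x) ∂μ =
      s⁻¹ • (a • ∫ x₀, (gaussKernel a s x x₀ * w x₀) • x₀ ∂μ -
        (∫ x₀, gaussKernel a s x x₀ * w x₀ ∂μ) • x) := by
  have hsplit : (fun x₀ => (s⁻¹ * (gaussKernel a s x x₀ * w x₀)) • (a • x₀ - x)) = fun x₀ =>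
      s⁻¹ • (a • ((gaussKernel a s x x₀ * w x₀) • x₀) - (gaussKernel a s x x₀ * w x₀) • x) := by
    funext x₀; rw [mul_smul, smul_sub, smul_comm _ a]
  rw [hsplit, integral_smul,
    integral_sub ((integrable_gaussKernel_mul_smul hs hw hw₁ x).fun_smul a)
      ((integrable_gaussKernel_mul hs hw x).smul_const x),
    integral_smul, integral_smul_const]

lemma hasFDerivAt_integral_gaussKernel_mul (hs : 0 < s) (hw : Integrable w μ)
    (hw₁ : Integrable (fun x₀ => ‖x₀‖ * w x₀) μ) (x : E) :
    HasFDerivAt (fun y => ∫ x₀, gaussKernel a s y x₀ * w x₀ ∂μ)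
      (innerSL ℝ (s⁻¹ • (a • ∫ x₀, (gaussKernel a s x x₀ * w x₀) • x₀ ∂μ -
        (∫ x₀, gaussKernel a s x x₀ * w x₀ ∂μ) • x))) x := by
  set v : E → E → E := fun y x₀ => (s⁻¹ * (gaussKernel a s y x₀ * w x₀)) • (a • x₀ - y)
  have hv_meas : ∀ y, AEStronglyMeasurable (v y) μ := fun y =>
    ((integrable_gaussKernel_mul hs.le hw y).1.const_mul s⁻¹).smul
      ((continuous_const_smul a).sub continuous_const).aestronglyMeasurable
  set bound : E → ℝ := fun x₀ => s⁻¹ * (|a| * (‖x₀‖ * ‖w x₀‖) + (‖x‖ + 1) * ‖w x₀‖)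
  have hbound : Integrable bound μ :=
    ((hw₁.norm.congr (.of_forall fun x₀ => by simp)).const_mul |a|).add (hw.norm.const_mul _)
      |>.const_mul s⁻¹
  have hv_le : ∀ x₀, ∀ y ∈ ball x 1, ‖v y x₀‖ ≤ bound x₀ := fun x₀ y hy => by
    have hy : ‖y‖ ≤ ‖x‖ + 1 := by
      rw [mem_ball, dist_eq_norm] at hy
      linarith [norm_le_norm_add_norm_sub' y x]
    have hdist : ‖a • x₀ - y‖ ≤ |a| * ‖x₀‖ + (‖x‖ + 1) :=
      (norm_sub_le _ _).trans (by rw [norm_smul, norm_eq_abs]; linarith)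
    calc ‖v y x₀‖ = s⁻¹ * ‖gaussKernel a s y x₀ * w x₀‖ * ‖a • x₀ - y‖ := by
          rw [norm_smul, norm_mul, norm_inv, norm_of_nonneg hs.le]
      _ ≤ s⁻¹ * ‖w x₀‖ * (|a| * ‖x₀‖ + (‖x‖ + 1)) := by
          gcongr
          exact norm_gaussKernel_mul_le hs.le y x₀ (w x₀)
      _ = bound x₀ := by ring
  have hderiv : ∀ x₀ y, HasFDerivAt (gaussKernel a s · x₀ * w x₀) (innerSL ℝ (v y x₀)) y :=
    fun x₀ y => (hasFDerivAt_gaussKernel x₀ y).mul_const (w x₀) |>.congr_fderiv <| by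
      ext u
      simp only [v, smul_apply, innerSL_apply_apply, smul_eq_mul, real_inner_smul_left]
      ring
  have key := hasFDerivAt_integral_of_dominated_of_fderiv_le (ball_mem_nhds x one_pos)
    (.of_forall fun y => (integrable_gaussKernel_mul hs.le hw y).1)
    (integrable_gaussKernel_mul hs.le hw x)
    ((innerSL ℝ).continuous.comp_aestronglyMeasurable (hv_meas x))
    (.of_forall fun x₀ y hy => (innerSL_apply_norm ℝ (v y x₀)).trans_le (hv_le x₀ y hy))
    hbound (.of_forall fun x₀ y _ => hderiv x₀ y)
  have hv_int : Integrable (v x) μ :=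
    hbound.mono' (hv_meas x) (.of_forall fun x₀ => hv_le x₀ x (mem_ball_self one_pos))
  rwa [(innerSL ℝ).integral_comp_comm hv_int, integral_gaussKernel_mul_smul_sub hs.le hw hw₁ x]
    at key

lemma hasGradientAt_log_integral_gaussKernel_mul (hs : 0 < s) (hw₀ : 0 ≤ w) (hw : Integrable w μ)
    (hw₁ : Integrable (fun x₀ => ‖x₀‖ * w x₀) μ) (hpos : 0 < ∫ x₀, w x₀ ∂μ) (x : E) :
    HasGradientAt (fun y => log (∫ x₀, gaussKernel a s y x₀ * w x₀ ∂μ))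
      (s⁻¹ • (a • (∫ x₀, gaussKernel a s x x₀ * w x₀ ∂μ)⁻¹ •
        ∫ x₀, (gaussKernel a s x x₀ * w x₀) • x₀ ∂μ - x)) x := by
  have hZ := (integral_gaussKernel_mul_pos (a := a) hs.le hw₀ hw hpos x).ne'
  rw [hasGradientAt_iff_hasFDerivAt]
  refine ((hasFDerivAt_integral_gaussKernel_mul hs hw hw₁ x).log hZ).congr_fderiv ?_
  ext u
  simp only [smul_apply, innerSL_apply_apply, toDual_apply_apply, smul_eq_mul, inner_sub_left,
    real_inner_smul_left]
  field_simp

end Integral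

theorem score_representation
    (n : ℕ) (a s : ℝ) (hs : 0 < s)
    (p₀ : EuclideanSpace ℝ (Fin n) → ℝ)
    (hp₀nonneg : ∀ x, 0 ≤ p₀ x)
    (hp₀int : Integrable p₀)
    (hp₀one : ∫ x, p₀ x = 1)
    (hp₀moment : Integrable (fun x₀ => ‖x₀‖ * p₀ x₀))
    (p : EuclideanSpace ℝ (Fin n) → ℝ)
    (hp : ∀ x, p x =
      ∫ x₀, (2 * π * s) ^ (-(n : ℝ) / 2) * Real.exp (-‖x - a • x₀‖ ^ 2 / (2 * s)) * p₀ x₀)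
    (m : EuclideanSpace ℝ (Fin n) → EuclideanSpace ℝ (Fin n))
    (hm : ∀ x, m x =
      (∫ x₀, Real.exp (-‖x - a • x₀‖ ^ 2 / (2 * s)) * p₀ x₀)⁻¹ •
        ∫ x₀, (Real.exp (-‖x - a • x₀‖ ^ 2 / (2 * s)) * p₀ x₀) • x₀) :
    (∀ x, 0 < p x) ∧ Differentiable ℝ p ∧
      ∀ x, gradient (fun y => Real.log (p y)) x = (1 / s) • (a • m x - x) := by
  set C := (2 * π * s) ^ (-(n : ℝ) / 2)
  set Z := fun y => ∫ x₀, gaussKernel a s y x₀ * p₀ x₀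
  have hC : 0 < C := by positivity
  have hpZ : p = fun y => C * Z y := funext fun y => by
    rw [hp y, ← integral_const_mul]; simp only [mul_assoc]; rfl
  have hmass : 0 < ∫ x₀, p₀ x₀ := hp₀one ▸ one_pos
  have hZ : ∀ y, 0 < Z y := integral_gaussKernel_mul_pos hs.le hp₀nonneg hp₀int hmass
  have hlogp : (fun y => log (p y)) = fun y => log C + log (Z y) := funext fun y => by
    rw [hpZ, log_mul hC.ne' (hZ y).ne']
  refine ⟨fun x => hpZ ▸ mul_pos hC (hZ x), ?_, fun x => ?_⟩
  · rw [hpZ]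
    exact fun x =>
      ((hasFDerivAt_integral_gaussKernel_mul hs hp₀int hp₀moment x).differentiableAt.const_mul C)
  · have hlogZ := hasGradientAt_iff_hasFDerivAt.mp <|
      hasGradientAt_log_integral_gaussKernel_mul (a := a) hs hp₀nonneg hp₀int hp₀moment hmass x
    rw [hlogp, one_div, hm x]
    exact (hasGradientAt_iff_hasFDerivAt.mpr (hlogZ.const_add (log C))).gradient
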